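/- arXiv:2301.05633 — 5 statements merged into one kernel-verified Lean document; each statement's English description precedes it below -/
import Mathlib

section
/- If a(i) = α^i for fixed 0 < α < 1, then the variance of the time for the particle to descend from state r to state 0 equals (1 − α^r)(1 − α^{r+1})/((1 − α^2)·α^{2r}). -/
/-!
Each `G i` is distributed as `1 + N` with `N` geometric on `ℕ` (failures before the first
success) with parameter `p = α ^ i`, so its variance is `(1 - p) / p ^ 2`, computed from the
series `∑ n q^n = q / (1 - q)^2` and `∑ n^2 q^n = q (1 + q) / (1 - q)^3`. By independence the
variance of the sum is `∑_{i=1}^r (1 - α^i) / α^(2i)`, which is summed in closed form by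
induction on `r`.
-/

open MeasureTheory ProbabilityTheory Finset

theorem hasSum_sq_mul_geometric_of_norm_lt_one {𝕜 : Type*} [NormedField 𝕜] {q : 𝕜} (hq : ‖q‖ < 1) :
    HasSum (fun n : ℕ ↦ (n : 𝕜) ^ 2 * q ^ n) (q * (1 + q) / (1 - q) ^ 3) := by
  have hq1 : 1 - q ≠ 0 := by
    intro h; rw [sub_eq_zero] at h; simp [← h] at hq
  have hchoose (n : ℕ) : ((n + 2).choose 2 : 𝕜) * 2 = (n + 2) * (n + 1) := by
    have h : (n + 2).choose 2 * 2 = (n + 2) * (n + 1) := by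
      simpa using (Nat.add_one_mul_choose_eq (n + 1) 1).symm
    simpa using congrArg (Nat.cast : ℕ → 𝕜) h
  -- `n ^ 2 = 2 * (n + 2).choose 2 - 3 * (n + 1) + 1`
  have h := (((hasSum_choose_mul_geometric_of_norm_lt_one 2 hq).mul_left 2).sub
    ((hasSum_choose_mul_geometric_of_norm_lt_one 1 hq).mul_left 3)).add
    (hasSum_geometric_of_norm_lt_one hq)
  rw [show q * (1 + q) / (1 - q) ^ 3 = 2 * (1 / (1 - q) ^ (2 + 1)) - 3 * (1 / (1 - q) ^ (1 + 1))
      + (1 - q)⁻¹ by field_simp; ring]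
  refine h.congr_fun fun n ↦ ?_
  rw [Nat.choose_one_right, ← mul_assoc, mul_comm (2 : 𝕜), hchoose]
  push_cast
  ring

lemma unitInterval.norm_one_sub_lt_one {p : unitInterval} (hp : p ≠ 0) : ‖(1 - p : ℝ)‖ < 1 := by
  have : (0 : ℝ) < p := unitInterval.pos_iff_ne_zero.2 hp
  rw [Real.norm_of_nonneg (by linarith [p.2.2])]
  linarith

namespace ProbabilityTheory

variable {p : unitInterval}

lemma integral_geometricMeasure_of_hasSum (hp : p ≠ 0) {f : ℕ → ℝ} {a : ℝ}
    (hf : HasSum (fun n ↦ f n * (1 - p) ^ n) a) :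
    ∫ n, f n ∂geometricMeasure p = p * a := by
  rw [integral_geometricMeasure hp, ← (hf.mul_left (p : ℝ)).tsum_eq]
  congr with n
  rw [smul_eq_mul]
  ring

lemma memLp_two_natCast_geometricMeasure (hp : p ≠ 0) :
    MemLp (fun n : ℕ ↦ (n : ℝ)) 2 (geometricMeasure p) := by
  refine (memLp_two_iff_integrable_sq (by fun_prop)).2 ?_
  refine (integrable_geometricMeasure_iff hp).2 ?_
  have hsum := hasSum_sq_mul_geometric_of_norm_lt_one (unitInterval.norm_one_sub_lt_one hp)
  refine ((hsum.mul_right (p : ℝ)).summable).congr fun n ↦ ?_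
  rw [Real.norm_of_nonneg (by positivity)]
  ring

lemma integral_natCast_geometricMeasure (hp : p ≠ 0) :
    ∫ n, (n : ℝ) ∂geometricMeasure p = (1 - p) / p := by
  have hp0 : (p : ℝ) ≠ 0 := unitInterval.coe_ne_zero.2 hp
  rw [integral_geometricMeasure_of_hasSum hp
    (hasSum_coe_mul_geometric_of_norm_lt_one (unitInterval.norm_one_sub_lt_one hp)),
    sub_sub_cancel]
  field_simp

lemma integral_natCast_sq_geometricMeasure (hp : p ≠ 0) :
    ∫ n, (n : ℝ) ^ 2 ∂geometricMeasure p = (1 - p) * (2 - p) / p ^ 2 := by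
  have hp0 : (p : ℝ) ≠ 0 := unitInterval.coe_ne_zero.2 hp
  rw [integral_geometricMeasure_of_hasSum hp
    (hasSum_sq_mul_geometric_of_norm_lt_one (unitInterval.norm_one_sub_lt_one hp)),
    sub_sub_cancel]
  field_simp
  ring

lemma variance_natCast_geometricMeasure (hp : p ≠ 0) :
    Var[fun n : ℕ ↦ (n : ℝ); geometricMeasure p] = (1 - p) / p ^ 2 := by
  have hp0 : (p : ℝ) ≠ 0 := unitInterval.coe_ne_zero.2 hp
  rw [variance_eq_sub (memLp_two_natCast_geometricMeasure hp)]
  simp only [Pi.pow_apply]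
  rw [integral_natCast_sq_geometricMeasure hp, integral_natCast_geometricMeasure hp]
  field_simp
  ring

lemma memLp_two_natCast_map_succ_geometricMeasure (hp : p ≠ 0) :
    MemLp (fun n : ℕ ↦ (n : ℝ)) 2 ((geometricMeasure p).map (· + 1)) := by
  refine (memLp_map_measure_iff (by fun_prop) (by fun_prop)).2 ?_
  convert (memLp_two_natCast_geometricMeasure hp).add (memLp_const (1 : ℝ)) using 1
  ext n
  simp

lemma variance_natCast_map_succ_geometricMeasure (hp : p ≠ 0) :
    Var[fun n : ℕ ↦ (n : ℝ); (geometricMeasure p).map (· + 1)] = (1 - p) / p ^ 2 := by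
  rw [variance_map (by fun_prop) (by fun_prop)]
  simpa [Function.comp_def] using (variance_add_const (by fun_prop) 1).trans
    (variance_natCast_geometricMeasure hp)

lemma _root_.MeasureTheory.Measure.le_of_forall_singleton_le {α : Type*} [MeasurableSpace α]
    [Countable α] [MeasurableSingletonClass α] {μ ν : Measure α} (h : ∀ a, μ {a} ≤ ν {a}) :
    μ ≤ ν := by
  refine Measure.le_iff.2 fun s hs ↦ ?_
  rw [← μ.tsum_indicator_apply_singleton s hs, ← ν.tsum_indicator_apply_singleton s hs]
  exact ENNReal.tsum_le_tsum fun a ↦ Set.indicator_le_indicator (h a)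

lemma measurePreserving_map_succ_geometricMeasure {Ω : Type*} [MeasurableSpace Ω]
    {μ : Measure Ω} [IsProbabilityMeasure μ] {X : Ω → ℕ} (hp : p ≠ 0) (hX : Measurable X)
    (hlaw : ∀ k, 1 ≤ k → μ {ω | X ω = k} = ENNReal.ofReal ((1 - p) ^ (k - 1) * p)) :
    MeasurePreserving X μ ((geometricMeasure p).map (· + 1)) := by
  have := Measure.isProbabilityMeasure_map (μ := μ) hX.aemeasurable
  have := Measure.isProbabilityMeasure_map (μ := geometricMeasure p) (f := (· + 1))
    (by fun_prop)
  refine ⟨hX, (Measure.eq_of_le_of_isProbabilityMeasure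
    (Measure.le_of_forall_singleton_le fun k ↦ ?_)).symm⟩
  rw [Measure.map_apply (by fun_prop) (measurableSet_singleton k),
    Measure.map_apply hX (measurableSet_singleton k)]
  rcases k with _ | k
  · simp [Set.preimage, eq_comm]
  · have hsucc : (· + 1) ⁻¹' {k + 1} = {k} := by ext; simp
    refine le_of_eq ?_
    rw [hsucc, geometricMeasure_singleton hp]
    exact (hlaw (k + 1) le_add_self).symm

end ProbabilityTheory

theorem sum_Icc_one_sub_pow_div_pow_sq {K : Type*} [Field K] {α : K} (hα : α ≠ 0)
    (hα2 : 1 - α ^ 2 ≠ 0) (r : ℕ) :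
    ∑ i ∈ Icc 1 r, (1 - α ^ i) / (α ^ i) ^ 2
      = (1 - α ^ r) * (1 - α ^ (r + 1)) / ((1 - α ^ 2) * α ^ (2 * r)) := by
  induction r with
  | zero => simp
  | succ r ih =>
    rw [sum_Icc_succ_top (Nat.le_add_left 1 r), ih]
    field_simp
    ring

/-- If `a i = α^i` for fixed `0 < α < 1`, then the variance of the time for the
particle to descend from state `r` to state `0` (the sum of independent geometric random
variables with success probabilities `α^i`, `i = 1, …, r`) equals
`(1 − α^r)(1 − α^{r+1})/((1 − α²)·α^{2r})`. -/
theorem markov_descent_variance_geometric_rates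
    {Ω : Type*} [MeasurableSpace Ω] (μ : Measure Ω) [IsProbabilityMeasure μ]
    (α : ℝ) (hα : 0 < α ∧ α < 1)
    (G : ℕ → Ω → ℕ) (hmeas : ∀ i, Measurable (G i))
    (hindep : iIndepFun G μ)
    (hgeom : ∀ i k, 1 ≤ k → μ {ω | G i ω = k} = ENNReal.ofReal ((1 - α ^ i) ^ (k - 1) * α ^ i))
    (r : ℕ) :
    variance (fun ω => (∑ i ∈ Finset.Icc 1 r, (G i ω : ℝ))) μ =
      (1 - α ^ r) * (1 - α ^ (r + 1)) / ((1 - α ^ 2) * α ^ (2 * r)) := by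
  obtain ⟨hα0, hα1⟩ := hα
  let p (i : ℕ) : unitInterval := ⟨α ^ i, pow_nonneg hα0.le i, pow_le_one₀ hα0.le hα1.le⟩
  have hp (i : ℕ) : p i ≠ 0 := unitInterval.coe_ne_zero.1 (pow_ne_zero i hα0.ne')
  have hlaw (i : ℕ) := measurePreserving_map_succ_geometricMeasure (hp i) (hmeas i) (hgeom i)
  have hL2 (i : ℕ) : MemLp (fun ω ↦ (G i ω : ℝ)) 2 μ :=
    (memLp_two_natCast_map_succ_geometricMeasure (hp i)).comp_measurePreserving (hlaw i)
  have hpair : Set.Pairwise ↑(Icc 1 r) fun i j ↦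
      IndepFun (fun ω ↦ (G i ω : ℝ)) (fun ω ↦ (G j ω : ℝ)) μ := fun i _ j _ hij ↦
    (hindep.indepFun hij).comp measurable_from_top measurable_from_top
  rw [← sum_fn, IndepFun.variance_sum (fun i _ ↦ hL2 i) hpair,
    ← sum_Icc_one_sub_pow_div_pow_sq hα0.ne' (by nlinarith)]
  refine sum_congr rfl fun i _ ↦ ?_
  rw [(hlaw i).variance_fun_comp (by fun_prop), variance_natCast_map_succ_geometricMeasure (hp i)]
end

section
/- In the ball-and-cell game with n ≥ 2 cells and 3 balls, the expected duration equals n(n+3)/(n²−1). -/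
open MeasureTheory ProbabilityTheory Finset

/-- One round of the Dym–Luks ball-and-cell game: given the set `S` of remaining balls and a
placement `f` of the balls into the `n` cells, the balls remaining afterwards are those
members of `S` that are not sole occupants of their cell (sole occupants are captured). -/
def remainingBalls (r n : ℕ) (S : Finset (Fin r)) (f : Fin r → Fin n) : Finset (Fin r) :=
  S.filter (fun b => ∃ b' ∈ S, b' ≠ b ∧ f b' = f b)

/-- The set of balls still in play after `k` rounds, starting from `r` balls, where
`ω k : Fin r → Fin n` is the placement of the balls used in round `k`. -/
def gameState (r n : ℕ) (ω : ℕ → Fin r → Fin n) : ℕ → Finset (Fin r)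
  | 0 => Finset.univ
  | k + 1 => remainingBalls r n (gameState r n ω k) (ω k)

/-- The duration of the game: the first time at which no balls remain. -/
noncomputable def gameDuration (r n : ℕ) (ω : ℕ → Fin r → Fin n) : ℕ :=
  sInf {k | gameState r n ω k = ∅}

open scoped ENNReal

/-!
Two balls `a ≠ b` both survive a round exactly when they land in the same cell: otherwise each
of them would need the third ball in its own cell. Hence `{a, b}` is still in play after `k`
rounds iff `a` and `b` collided in each of the first `k` rounds, an event of probability `n⁻ᵏ`,
and all three balls are in play iff all three collided in every round, probability `n⁻²ᵏ`.
The set of remaining balls is never a singleton, so the game lasts more than `k` rounds iff some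
pair is still in play, and inclusion–exclusion gives `P(T > k) = 3 n⁻ᵏ - 2 n⁻²ᵏ`. Summing the
tail probabilities, `E T = 3n/(n-1) - 2n²/(n²-1) = n(n+3)/(n²-1)`.
-/

theorem lintegral_natCast_eq_tsum_measure_lt {Ω : Type*} [MeasurableSpace Ω] (μ : Measure Ω)
    {f : Ω → ℕ} (hf : Measurable f) :
    ∫⁻ ω, (f ω : ℝ≥0∞) ∂μ = ∑' k, μ {ω | k < f ω} := by
  have hmeas (k : ℕ) : MeasurableSet {ω | k < f ω} := hf measurableSet_Ioi
  have hf_eq (ω : Ω) : (f ω : ℝ≥0∞) = ∑' k, {ω | k < f ω}.indicator 1 ω := by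
    rw [tsum_eq_sum (s := range (f ω)) fun k hk => by simpa [Set.indicator_apply] using hk,
      sum_congr rfl fun k hk => Set.indicator_of_mem (s := {ω | k < f ω}) (mem_range.1 hk) 1]
    simp
  simp_rw [hf_eq]
  rw [lintegral_tsum fun k => (measurable_one.indicator (hmeas k)).aemeasurable]
  exact tsum_congr fun k => lintegral_indicator_one (hmeas k)

theorem measure_union_union_add_two_mul {Ω : Type*} [MeasurableSpace Ω] (μ : Measure Ω)
    {A B C D : Set Ω} (hB : MeasurableSet B) (hC : MeasurableSet C)
    (hAB : A ∩ B = D) (hAC : A ∩ C = D) (hBC : B ∩ C = D) :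
    μ (A ∪ B ∪ C) + 2 * μ D = μ A + μ B + μ C := by
  have hunion := measure_union_add_inter (μ := μ) (A ∪ B) hC
  rw [Set.union_inter_distrib_right, hAC, hBC, Set.union_self] at hunion
  rw [two_mul, ← add_assoc, hunion, ← hAB, add_right_comm, measure_union_add_inter A hB]

theorem natCard_apply_eq_apply {α β : Type*} [Finite α] {a b : α} (hab : a ≠ b) :
    Nat.card {g : α → β // g a = g b} = Nat.card β ^ (Nat.card α - 1) := by
  classical
  have := Fintype.ofFinite α
  let e : {g : α → β // g a = g b} ≃ ({x // x ≠ a} → β) :=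
    { toFun := fun g x => g.1 x
      invFun := fun h => ⟨fun x => if hx : x = a then h ⟨b, hab.symm⟩ else h ⟨x, hx⟩,
        by simp [hab.symm]⟩
      left_inv := fun g => by
        ext x
        by_cases hx : x = a
        · subst hx; simp [g.2]
        · simp [hx]
      right_inv := fun h => by
        ext ⟨x, hx⟩
        simp [hx] }
  rw [Nat.card_congr e, Nat.card_fun]
  simp [Nat.card_eq_fintype_card]

theorem natCard_forall_apply_eq_apply {α β : Type*} [Nonempty α] :
    Nat.card {g : α → β // ∀ x y, g x = g y} = Nat.card β :=
  Nat.card_congr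
    { toFun := fun g => g.1 (Classical.arbitrary α)
      invFun := fun b => ⟨fun _ => b, fun _ _ => rfl⟩
      left_inv := fun g => by ext x; exact g.2 _ _
      right_inv := fun _ => rfl }

theorem pow_div_pow_add_eq_inv {x : ℝ≥0∞} (hx₀ : x ≠ 0) (hx : x ≠ ⊤) (a b : ℕ) :
    x ^ a / x ^ (a + b) = (x ^ b)⁻¹ := by
  rw [pow_add, ← one_div,
    ← ENNReal.mul_div_mul_left 1 _ (pow_ne_zero a hx₀) (ENNReal.pow_ne_top hx), mul_one]

theorem measurableSet_forall_lt_apply {α : Type*} [MeasurableSpace α] [DiscreteMeasurableSpace α]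
    (p : α → Prop) (k : ℕ) : MeasurableSet {ω : ℕ → α | ∀ i < k, p (ω i)} := by
  simp only [Set.ofPred_forall]
  exact .iInter fun i => .iInter fun _ => measurable_pi_apply i .of_discrete

section Game

variable {r n : ℕ}

theorem remainingBalls_ne_singleton (S : Finset (Fin r)) (f : Fin r → Fin n) (a : Fin r) :
    remainingBalls r n S f ≠ {a} := by
  intro h
  have ha : a ∈ remainingBalls r n S f := h ▸ mem_singleton_self a
  obtain ⟨haS, b, hbS, hba, hfb⟩ := mem_filter.1 ha
  have hb : b ∈ remainingBalls r n S f := mem_filter.2 ⟨hbS, a, haS, hba.symm, hfb.symm⟩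
  exact hba (mem_singleton.1 (h ▸ hb))

theorem gameState_ne_singleton (hr : r ≠ 1) (ω : ℕ → Fin r → Fin n) (k : ℕ) (a : Fin r) :
    gameState r n ω k ≠ {a} := by
  cases k with
  | zero => exact fun h => hr (by simpa [gameState] using congrArg card h)
  | succ k => exact remainingBalls_ne_singleton _ _ _

theorem gameState_eq_empty_of_le {ω : ℕ → Fin r → Fin n} {j k : ℕ} (hjk : j ≤ k)
    (hj : gameState r n ω j = ∅) : gameState r n ω k = ∅ := by
  induction k, hjk using Nat.le_induction with
  | base => exact hj
  | succ k _ ih => simp [gameState, ih, remainingBalls]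

theorem lt_gameDuration_iff (ω : ℕ → Fin r → Fin n) (k : ℕ) :
    k < gameDuration r n ω ↔ gameState r n ω k ≠ ∅ ∧ ∃ j, gameState r n ω j = ∅ := by
  constructor
  · intro hk
    have hends : {j | gameState r n ω j = ∅}.Nonempty := by
      by_contra h
      simp [gameDuration, Set.not_nonempty_iff_eq_empty.1 h] at hk
    exact ⟨fun h => hk.not_ge (Nat.sInf_le h), hends⟩
  · rintro ⟨hk, hends⟩
    by_contra! h
    exact hk (gameState_eq_empty_of_le h (Nat.sInf_mem hends))

theorem measurableSet_gameState_eq (k : ℕ) (S : Finset (Fin r)) :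
    MeasurableSet {ω : ℕ → Fin r → Fin n | gameState r n ω k = S} := by
  induction k generalizing S with
  | zero => exact .const (univ = S)
  | succ k ih =>
    have hsplit : {ω : ℕ → Fin r → Fin n | gameState r n ω (k + 1) = S} =
        ⋃ T, {ω | gameState r n ω k = T} ∩ (fun ω => ω k) ⁻¹' {g | remainingBalls r n T g = S} := by
      ext ω
      simp [gameState]
    rw [hsplit]
    exact .iUnion fun T => (ih T).inter (measurable_pi_apply k .of_discrete)

theorem measurable_gameDuration : Measurable (gameDuration r n) := by
  refine measurable_of_Ioi fun k => ?_
  have hset : gameDuration r n ⁻¹' Set.Ioi k =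
      {ω | gameState r n ω k = ∅}ᶜ ∩ ⋃ j, {ω | gameState r n ω j = ∅} := by
    ext ω
    simp [lt_gameDuration_iff]
  rw [hset]
  exact (measurableSet_gameState_eq k ∅).compl.inter
    (.iUnion fun j => measurableSet_gameState_eq j ∅)

theorem lintegral_gameDuration (μ : Measure (ℕ → Fin r → Fin n))
    (hends : ∀ᵐ ω ∂μ, ∃ j, gameState r n ω j = ∅) :
    ∫⁻ ω, (gameDuration r n ω : ℝ≥0∞) ∂μ = ∑' k, μ {ω | gameState r n ω k ≠ ∅} := by
  rw [lintegral_natCast_eq_tsum_measure_lt μ measurable_gameDuration]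
  refine tsum_congr fun k => measure_congr (Filter.eventuallyEq_set.2 ?_)
  filter_upwards [hends] with ω hω
  simp [lt_gameDuration_iff, hω]

end Game

section Uniform

variable {r n : ℕ} {μ : Measure (ℕ → Fin r → Fin n)}
  (hunif : ∀ (k : ℕ) (g : Fin r → Fin n), μ {ω | ω k = g} = ((n : ℝ≥0∞) ^ r)⁻¹)
include hunif

theorem measure_setOf_apply (p : (Fin r → Fin n) → Prop) (k : ℕ) :
    μ {ω | p (ω k)} = Nat.card {g // p g} / (n : ℝ≥0∞) ^ r := by
  classical
  have hset : {ω : ℕ → Fin r → Fin n | p (ω k)} = ⋃ g ∈ ({g | p g} : Finset _), {ω | ω k = g} := by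
    ext; simp
  rw [hset, measure_biUnion_finset]
  · simp [hunif, div_eq_mul_inv, Fintype.card_subtype]
  · exact fun g _ g' _ hne => Set.disjoint_left.2 fun ω h h' => hne (h.symm.trans h')
  · exact fun g _ => measurableSet_eq_fun (measurable_pi_apply k) measurable_const

theorem measure_forall_lt_apply (hindep : iIndepFun (fun k ω => ω k) μ)
    (p : (Fin r → Fin n) → Prop) (k : ℕ) :
    μ {ω | ∀ i < k, p (ω i)} = (Nat.card {g // p g} / (n : ℝ≥0∞) ^ r) ^ k := by
  have hset : {ω : ℕ → Fin r → Fin n | ∀ i < k, p (ω i)} =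
      ⋂ i ∈ range k, (fun ω => ω i) ⁻¹' {g | p g} := by ext; simp
  rw [hset, hindep.measure_inter_preimage_eq_mul _ fun _ _ => .of_discrete]
  simp only [Set.preimage_ofPred_eq, measure_setOf_apply hunif, prod_const, card_range]

end Uniform

section ThreeBalls

variable {n : ℕ}

theorem pair_subset_remainingBalls_iff {a b : Fin 3} (hab : a ≠ b) (S : Finset (Fin 3))
    (f : Fin 3 → Fin n) : {a, b} ⊆ remainingBalls 3 n S f ↔ {a, b} ⊆ S ∧ f a = f b := by
  simp only [insert_subset_iff, singleton_subset_iff, remainingBalls, mem_filter]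
  constructor
  · rintro ⟨⟨ha, b', -, hb'a, hfb'⟩, hb, a', -, ha'b, hfa'⟩
    refine ⟨⟨ha, hb⟩, ?_⟩
    rcases eq_or_ne b' b with rfl | hb'b
    · exact hfb'.symm
    rcases eq_or_ne a' a with rfl | ha'a
    · exact hfa'
    -- otherwise `a'` and `b'` are both the third ball, which shares a cell with `a` and `b`
    have hthird : ∀ a b x y : Fin 3, a ≠ b → x ≠ a → x ≠ b → y ≠ a → y ≠ b → x = y := by decide
    rw [← hfb', hthird a b b' a' hab hb'a hb'b ha'a ha'b, hfa']
  · rintro ⟨⟨ha, hb⟩, hf⟩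
    exact ⟨⟨ha, b, hb, hab.symm, hf.symm⟩, hb, a, ha, hab, hf⟩

theorem pair_subset_gameState_iff {a b : Fin 3} (hab : a ≠ b) (ω : ℕ → Fin 3 → Fin n) (k : ℕ) :
    {a, b} ⊆ gameState 3 n ω k ↔ ∀ i < k, ω i a = ω i b := by
  induction k with
  | zero => simp [gameState]
  | succ k ih =>
    rw [gameState, pair_subset_remainingBalls_iff hab, ih, Nat.forall_lt_succ_right]

theorem gameState_ne_empty_iff (ω : ℕ → Fin 3 → Fin n) (k : ℕ) :
    gameState 3 n ω k ≠ ∅ ↔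
      (∀ i < k, ω i 0 = ω i 1) ∨ (∀ i < k, ω i 0 = ω i 2) ∨ (∀ i < k, ω i 1 = ω i 2) := by
  have hpairs : ∀ S : Finset (Fin 3), (∀ a, S ≠ {a}) →
      (S ≠ ∅ ↔ {0, 1} ⊆ S ∨ {0, 2} ⊆ S ∨ {1, 2} ⊆ S) := by decide
  rw [hpairs _ (gameState_ne_singleton (by norm_num) ω k),
    pair_subset_gameState_iff (a := 0) (b := 1) (by decide),
    pair_subset_gameState_iff (a := 0) (b := 2) (by decide),
    pair_subset_gameState_iff (a := 1) (b := 2) (by decide)]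

end ThreeBalls

section ThreeBallsProbability

variable {n : ℕ} {μ : Measure (ℕ → Fin 3 → Fin n)}
  (hindep : iIndepFun (fun k ω => ω k) μ)
  (hunif : ∀ (k : ℕ) (g : Fin 3 → Fin n), μ {ω | ω k = g} = ((n : ℝ≥0∞) ^ 3)⁻¹)
include hindep hunif

theorem measure_gameState_ne_empty_add (hn : n ≠ 0) (k : ℕ) :
    μ {ω | gameState 3 n ω k ≠ ∅} + 2 * ((n : ℝ≥0∞) ^ 2)⁻¹ ^ k = 3 * (n : ℝ≥0∞)⁻¹ ^ k := by
  have hn₀ : (n : ℝ≥0∞) ≠ 0 := by exact_mod_cast hn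
  let collide (a b : Fin 3) : Set (ℕ → Fin 3 → Fin n) := {ω | ∀ i < k, ω i a = ω i b}
  let allCollide : Set (ℕ → Fin 3 → Fin n) := {ω | ∀ i < k, ∀ x y, ω i x = ω i y}
  have hcollide {a b : Fin 3} (hab : a ≠ b) : μ (collide a b) = (n : ℝ≥0∞)⁻¹ ^ k := by
    rw [measure_forall_lt_apply hunif hindep (fun g => g a = g b), natCard_apply_eq_apply hab]
    simp [pow_div_pow_add_eq_inv (a := 2) (b := 1) hn₀ (ENNReal.natCast_ne_top n)]
  have hallCollide : μ allCollide = ((n : ℝ≥0∞) ^ 2)⁻¹ ^ k := by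
    rw [measure_forall_lt_apply hunif hindep (fun g => ∀ x y, g x = g y),
      natCard_forall_apply_eq_apply]
    simp [← pow_div_pow_add_eq_inv (a := 1) (b := 2) hn₀ (ENNReal.natCast_ne_top n)]
  have hinter (a b c d : Fin 3)
      (h : ∀ g : Fin 3 → Fin n, g a = g b ∧ g c = g d ↔ ∀ x y, g x = g y) :
      collide a b ∩ collide c d = allCollide := by
    ext ω
    simp only [Set.mem_inter_iff, Set.mem_ofPred_eq, ← forall_and, h, collide, allCollide]
  have hunion : {ω | gameState 3 n ω k ≠ ∅} = collide 0 1 ∪ collide 0 2 ∪ collide 1 2 := by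
    ext ω
    simp [collide, gameState_ne_empty_iff, or_assoc]
  have hmeas (a b : Fin 3) : MeasurableSet (collide a b) :=
    measurableSet_forall_lt_apply (fun g : Fin 3 → Fin n => g a = g b) k
  have hinclExcl := measure_union_union_add_two_mul μ (hmeas 0 2) (hmeas 1 2)
    (hinter 0 1 0 2 fun g => by simp [Fin.forall_fin_succ]; grind)
    (hinter 0 1 1 2 fun g => by simp [Fin.forall_fin_succ]; grind)
    (hinter 0 2 1 2 fun g => by simp [Fin.forall_fin_succ]; grind)
  rw [hunion, ← hallCollide, hinclExcl, hcollide (by decide), hcollide (by decide), hcollide (by decide)]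
  ring

theorem ae_exists_gameState_eq_empty (hn : 1 < n) : ∀ᵐ ω ∂μ, ∃ j, gameState 3 n ω j = ∅ := by
  have hle (k : ℕ) : μ {ω | ∀ j, gameState 3 n ω j ≠ ∅} ≤ 3 * (n : ℝ≥0∞)⁻¹ ^ k :=
    calc μ {ω | ∀ j, gameState 3 n ω j ≠ ∅} ≤ μ {ω | gameState 3 n ω k ≠ ∅} :=
          measure_mono fun ω h => h k
      _ ≤ _ := le_self_add.trans_eq (measure_gameState_ne_empty_add hindep hunif (by omega) k)
  have hlim : Filter.Tendsto (fun k => 3 * (n : ℝ≥0∞)⁻¹ ^ k) Filter.atTop (nhds 0) := by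
    simpa using ENNReal.Tendsto.const_mul (ENNReal.tendsto_pow_atTop_nhds_zero_of_lt_one
      (ENNReal.inv_lt_one.2 (by exact_mod_cast hn))) (Or.inr ENNReal.ofNat_ne_top)
  rw [ae_iff]
  simpa using le_antisymm (ge_of_tendsto' hlim hle) zero_le

theorem measureReal_gameState_ne_empty [IsFiniteMeasure μ] (hn : n ≠ 0) (k : ℕ) :
    μ.real {ω | gameState 3 n ω k ≠ ∅} = 3 * (n : ℝ)⁻¹ ^ k - 2 * ((n : ℝ) ^ 2)⁻¹ ^ k := by
  have h := congrArg ENNReal.toReal (measure_gameState_ne_empty_add hindep hunif hn k)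
  rw [ENNReal.toReal_add (measure_ne_top μ _) (ENNReal.mul_ne_top ENNReal.ofNat_ne_top
    (ENNReal.pow_ne_top (ENNReal.inv_ne_top.2 (pow_ne_zero 2 (Nat.cast_ne_zero.2 hn)))))] at h
  rw [measureReal_def, eq_sub_iff_add_eq]
  simpa using h

end ThreeBallsProbability

/-- In the ball-and-cell game with `n ≥ 2` cells and `3` balls (each round
every remaining ball is placed independently uniformly at random into one of the `n` cells,
sole occupants are captured, rounds independent), the expected duration equals
`n(n+3)/(n²−1)`. -/
theorem ball_cell_three_balls_expected_duration (n : ℕ) (hn : 2 ≤ n)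
    (μ : Measure (ℕ → Fin 3 → Fin n)) [IsProbabilityMeasure μ]
    (hindep : iIndepFun (fun k ω => ω k) μ)
    (hunif : ∀ (k : ℕ) (g : Fin 3 → Fin n), μ {ω | ω k = g} = ((n : ENNReal) ^ 3)⁻¹) :
    ∫ ω, (gameDuration 3 n ω : ℝ) ∂μ = (n : ℝ) * ((n : ℝ) + 3) / ((n : ℝ) ^ 2 - 1) := by
  have hn₁ : (1 : ℝ) < n := by exact_mod_cast hn
  have hsum : HasSum (fun k => μ.real {ω | gameState 3 n ω k ≠ ∅})
      (3 * (1 - (n : ℝ)⁻¹)⁻¹ - 2 * (1 - ((n : ℝ) ^ 2)⁻¹)⁻¹) := by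
    simp_rw [measureReal_gameState_ne_empty hindep hunif (by omega : n ≠ 0)]
    exact ((hasSum_geometric_of_lt_one (by positivity) (inv_lt_one_of_one_lt₀ hn₁)).mul_left 3).sub
      ((hasSum_geometric_of_lt_one (by positivity)
        (inv_lt_one_of_one_lt₀ (one_lt_pow₀ hn₁ two_ne_zero))).mul_left 2)
  have hmeas : Measurable fun ω => (gameDuration 3 n ω : ℝ) :=
    measurable_from_nat.comp measurable_gameDuration
  rw [integral_eq_lintegral_of_nonneg_ae (.of_forall fun ω => by positivity)
      hmeas.aestronglyMeasurable]
  simp_rw [ENNReal.ofReal_natCast]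
  rw [lintegral_gameDuration μ (ae_exists_gameState_eq_empty hindep hunif (by omega)),
    ENNReal.tsum_toReal_eq fun k => measure_ne_top μ _]
  refine hsum.tsum_eq.trans ?_
  have h₁ : (n : ℝ) - 1 ≠ 0 := by linarith
  have h₂ : (n : ℝ) ^ 2 - 1 ≠ 0 := by nlinarith
  field_simp
  ring
end

section
/- For r balls placed independently uniformly at random into n cells, the probability that exactly t balls are sole occupants of their cells equals ∑_{j=t}^{min(n,r)} (−1)^{j−t} C(j,t) C(n,j) C(r,j) j! (n−j)^{r−j}/n^r. -/
/-!
For a placement `f`, count the pairs `(f, J)` where `J` is a `j`-set of balls that are all sole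
occupants under `f`: this is `N_j = ∑_f C(s(f), j)`, `s(f)` the number of sole occupants. Such an
`f` is an injective placement of `J` together with a placement of the remaining `r - j` balls into
the `n - j` cells not used by `J`, so `N_j = C(r,j) · j! C(n,j) · (n-j)^(r-j)`. Binomial inversion,
`∑_j (-1)^(j-t) C(j,t) C(s,j) = [s = t]`, recovers the number of `f` with `s(f) = t` from the `N_j`.
-/

open Finset Function

theorem sum_Icc_neg_one_pow_mul_choose_mul_choose (t : ℕ) {m s : ℕ} (hsm : s ≤ m) :
    ∑ j ∈ Icc t m, (-1 : ℤ) ^ (j - t) * j.choose t * s.choose j = if s = t then 1 else 0 := by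
  have hterm (i : ℕ) : (-1 : ℤ) ^ (t + i - t) * (t + i).choose t * s.choose (t + i) =
      s.choose t * ((-1) ^ i * (s - t).choose i) := by
    have := Nat.choose_mul (n := s) (Nat.le_add_right t i)
    rw [Nat.add_sub_cancel_left] at this ⊢
    rw [mul_assoc, mul_comm ((t + i).choose t : ℤ), ← Nat.cast_mul, this]
    push_cast
    ring
  rw [← Ico_add_one_right_eq_Icc, sum_Ico_eq_sum_range]
  simp only [hterm, ← mul_sum]
  rcases lt_or_ge s t with hst | hts
  · simp [Nat.choose_eq_zero_of_lt hst, hst.ne]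
  · have htrunc : ∑ i ∈ range (m + 1 - t), (-1 : ℤ) ^ i * (s - t).choose i =
        ∑ i ∈ range (s - t + 1), (-1 : ℤ) ^ i * (s - t).choose i := by
      refine (sum_subset (range_subset_range.2 (by omega)) fun i _ hi => ?_).symm
      simp only [mem_range, not_lt] at hi
      simp [Nat.choose_eq_zero_of_lt (show s - t < i by omega)]
    rw [htrunc, Int.alternating_sum_range_choose]
    by_cases h : s = t
    · simp [h]
    · simp [h, show s - t ≠ 0 by omega]

section BinomialMoments

variable {ι κ : Type*} [Fintype ι]

theorem cast_card_filter_card_eq_sum_neg_one_pow_mul_choose {R : Type*} [CommRing R] (S : ι → Finset κ) {m : ℕ}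
    (hm : ∀ a, #(S a) ≤ m) (t : ℕ) :
    (#{a | #(S a) = t} : R) =
      ∑ j ∈ Icc t m, (-1) ^ (j - t) * j.choose t * ∑ a, ((#(S a)).choose j : R) := by
  simp only [mul_sum]
  rw [sum_comm, ← sum_boole]
  refine sum_congr rfl fun a _ => ?_
  have h := congrArg (Int.cast : ℤ → R) (sum_Icc_neg_one_pow_mul_choose_mul_choose t (hm a))
  rw [apply_ite Int.cast, Int.cast_one, Int.cast_zero] at h
  push_cast at h
  exact h.symm

theorem sum_choose_card_eq_sum_card_filter_subset [Fintype κ] [DecidableEq κ]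
    (S : ι → Finset κ) (j : ℕ) :
    ∑ a, (#(S a)).choose j = ∑ J ∈ powersetCard j univ, #{a | J ⊆ S a} := by
  have h := sum_card_bipartiteAbove_eq_sum_card_bipartiteBelow (s := univ)
    (t := powersetCard j univ) (r := fun a J => J ⊆ S a)
  simp only [bipartiteAbove, bipartiteBelow] at h
  rw [← h]
  refine sum_congr rfl fun a _ => ?_
  rw [← card_powersetCard]
  congr 1
  ext J
  simp only [mem_powersetCard, mem_filter, subset_univ, true_and]
  tauto

end BinomialMoments

theorem card_funs_avoiding_range {β γ δ : Type*} [Fintype β] [DecidableEq β] [Fintype γ]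
    [DecidableEq γ] [Fintype δ] {g : δ → β} (hg : Injective g) :
    Fintype.card {h : γ → β // ∀ c d, h c ≠ g d} =
      (Fintype.card β - Fintype.card δ) ^ Fintype.card γ := by
  have hcompl : #{b : β | ∀ d, b ≠ g d} = Fintype.card β - Fintype.card δ := by
    have : ({b | ∀ d, b ≠ g d} : Finset β) = (univ.image g)ᶜ := by ext; simp [eq_comm]
    rw [this, card_compl, card_image_of_injective _ hg, card_univ]
  rw [Fintype.card_congr (Equiv.subtypePiEquivPi (β := fun _ : γ => β)
      (p := fun _ b => ∀ d, b ≠ g d)),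
    Fintype.card_pi, prod_const, card_univ, Fintype.card_subtype, hcompl]

section SoleOccupants

variable {α β : Type*} [Fintype α] [DecidableEq α] [DecidableEq β]

def soleOccupants (f : α → β) : Finset α :=
  univ.filter fun a => ∀ a', a' ≠ a → f a' ≠ f a

theorem mem_soleOccupants {f : α → β} {a : α} :
    a ∈ soleOccupants f ↔ ∀ a', a' ≠ a → f a' ≠ f a := by
  simp [soleOccupants]

theorem injOn_soleOccupants (f : α → β) : Set.InjOn f (soleOccupants f) :=
  fun a _ _ hb hab => not_not.1 fun hne => mem_soleOccupants.1 hb a hne hab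

theorem card_soleOccupants_le [Fintype β] (f : α → β) :
    #(soleOccupants f) ≤ min (Fintype.card β) (Fintype.card α) :=
  le_min (card_le_card_of_injOn f (fun _ _ => mem_univ _) (injOn_soleOccupants f))
    (card_le_univ _)

theorem subset_soleOccupants_iff {f : α → β} {J : Finset α} :
    J ⊆ soleOccupants f ↔
      Injective (fun a : J => f a) ∧ ∀ (a : {a // a ∉ J}) (b : J), f a ≠ f b := by
  simp only [subset_iff, mem_soleOccupants, Injective, Subtype.forall, Subtype.ext_iff]
  constructor
  · intro h
    refine ⟨fun a ha b hb hab => not_not.1 fun hne => h hb a hne hab,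
      fun a ha b hb hab => h hb a ?_ hab⟩
    rintro rfl
    exact ha hb
  · rintro ⟨hinj, hout⟩ a ha b hba hab
    by_cases hb : b ∈ J
    · exact hba (hinj b hb a ha hab)
    · exact hout b hb a ha hab

theorem card_filter_subset_soleOccupants [Fintype β] (J : Finset α) :
    #{f : α → β | J ⊆ soleOccupants f} =
      (Fintype.card β).descFactorial #J * (Fintype.card β - #J) ^ (Fintype.card α - #J) := by
  have hfiber (g : J → β) :
      Fintype.card {h : {a // a ∉ J} → β // Injective g ∧ ∀ a b, h a ≠ g b} =
        if Injective g then (Fintype.card β - #J) ^ (Fintype.card α - #J) else 0 := by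
    split_ifs with hg
    · simp only [hg, true_and]
      rw [card_funs_avoiding_range hg, Fintype.card_coe, Fintype.card_subtype_compl,
        Fintype.card_coe]
    · simp [hg]
  have hinj : #{g : J → β | Injective g} = (Fintype.card β).descFactorial #J := by
    rw [← Fintype.card_subtype, Fintype.card_congr (Equiv.subtypeInjectiveEquivEmbedding J β),
      Fintype.card_embedding_eq, Fintype.card_coe]
  rw [← Fintype.card_subtype,
    Fintype.card_congr ((Equiv.piEquivPiSubtypeProd (· ∈ J) fun _ => β).subtypeEquiv
      (q := fun p => Injective p.1 ∧ ∀ a b, p.2 a ≠ p.1 b) fun _ => subset_soleOccupants_iff),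
    Fintype.card_congr (Equiv.subtypeProdEquivSigmaSubtype
      fun (g : J → β) (h : {a // a ∉ J} → β) => Injective g ∧ ∀ a b, h a ≠ g b),
    Fintype.card_sigma, sum_congr rfl fun g _ => hfiber g, ← sum_filter, sum_const, hinj,
    smul_eq_mul]

theorem sum_choose_card_soleOccupants [Fintype β] (j : ℕ) :
    ∑ f : α → β, (#(soleOccupants f)).choose j =
      (Fintype.card α).choose j *
        ((Fintype.card β).descFactorial j * (Fintype.card β - j) ^ (Fintype.card α - j)) := by
  rw [sum_choose_card_eq_sum_card_filter_subset,
    sum_congr rfl fun J hJ => by rw [card_filter_subset_soleOccupants, (mem_powersetCard.1 hJ).2],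
    sum_const, card_powersetCard, card_univ, smul_eq_mul]

end SoleOccupants

theorem dym_luks_prob_exactly_t_captured_general (r n t : ℕ) :
    ((Finset.univ.filter
        (fun f : Fin r → Fin n =>
          (Finset.univ.filter (fun b : Fin r => ∀ b' : Fin r, b' ≠ b → f b' ≠ f b)).card = t)).card
        : ℝ) / (n : ℝ) ^ r =
      ∑ j ∈ Finset.Icc t (min n r),
        (-1 : ℝ) ^ (j - t) * (j.choose t) * (n.choose j) * (r.choose j) *
          (Nat.factorial j) * ((n - j : ℕ) : ℝ) ^ (r - j) / (n : ℝ) ^ r := by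
  rw [← sum_div]
  congr 1
  have hle (f : Fin r → Fin n) : #(soleOccupants f) ≤ min n r := by
    simpa using card_soleOccupants_le f
  -- The filter below is decided by `Nat.decidableForallFin`, so it is not `soleOccupants f` by `rfl`.
  have hsole (f : Fin r → Fin n) :
      ({b | ∀ b', b' ≠ b → f b' ≠ f b} : Finset (Fin r)) = soleOccupants f := by
    ext
    rw [mem_soleOccupants, mem_filter_univ]
  simp only [hsole]
  rw [cast_card_filter_card_eq_sum_neg_one_pow_mul_choose soleOccupants hle t]
  refine sum_congr rfl fun j _ => ?_
  rw [← Nat.cast_sum, sum_choose_card_soleOccupants, Nat.descFactorial_eq_factorial_mul_choose]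
  simp only [Fintype.card_fin]
  push_cast
  ring

/-- For `r` balls placed independently uniformly at random into `n` cells
(a uniformly random function `f : Fin r → Fin n`), the probability that exactly `t` balls
are sole occupants of their cells equals
`∑_{j=t}^{min(n,r)} (−1)^{j−t} C(j,t) C(n,j) C(r,j) j! (n−j)^{r−j}/n^r`
(the Dym–Luks inclusion-exclusion formula). -/
theorem dym_luks_prob_exactly_t_captured (r n t : ℕ) (hr : 1 ≤ r) (hn : 1 ≤ n) :
    ((Finset.univ.filter
        (fun f : Fin r → Fin n =>
          (Finset.univ.filter (fun b : Fin r => ∀ b' : Fin r, b' ≠ b → f b' ≠ f b)).card = t)).card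
        : ℝ) / (n : ℝ) ^ r =
      ∑ j ∈ Finset.Icc t (min n r),
        (-1 : ℝ) ^ (j - t) * (j.choose t) * (n.choose j) * (r.choose j) *
          (Nat.factorial j) * ((n - j : ℕ) : ℝ) ^ (r - j) / (n : ℝ) ^ r :=
  dym_luks_prob_exactly_t_captured_general r n t
end

section
/- The sums over t of the Dym–Luks probabilities equal one: for all positive integers r and n, ∑_{t=0}^{r} ∑_{j=t}^{n} (−1)^{j−t} C(j,t) C(n,j) C(r,j) j! (n−j)^{r−j}/n^r = 1. -/
/-!
Exchanging the order of summation, the coefficient of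
`a_j = C(n,j) C(r,j) j! (n-j)^(r-j) / n^r` is `∑_{t ≤ j} (-1)^(j-t) C(j,t) = (1 - 1)^j`, which
vanishes unless `j = 0`. Only `a_0 = n^r / n^r = 1` survives.
-/

open Finset

theorem sum_range_neg_one_pow_sub_mul_choose {R : Type*} [CommRing R] (j : ℕ) :
    ∑ t ∈ range (j + 1), (-1 : R) ^ (j - t) * (j.choose t) = 0 ^ j := by
  simpa [add_neg_cancel] using ((add_pow (1 : R) (-1) j).symm)

-- The pairs with `t > r` that the right side adds have `j ≥ t > r`, so they contribute nothing.
theorem sum_range_sum_Icc_eq_sum_range_sum_range {M : Type*} [AddCommMonoid M]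
    (f : ℕ → ℕ → M) (r n : ℕ) (hf : ∀ t j, r < j → f t j = 0) :
    ∑ t ∈ range (r + 1), ∑ j ∈ Icc t n, f t j = ∑ j ∈ range (n + 1), ∑ t ∈ range (j + 1), f t j := by
  have hswap : ∀ t j, t ∈ range (r + 1) ∧ j ∈ Icc t n ↔
      t ∈ {t ∈ range (j + 1) | t ≤ r} ∧ j ∈ range (n + 1) := by
    intro t j
    simp only [mem_range, mem_Icc, mem_filter]
    omega
  rw [sum_comm' hswap]
  refine sum_congr rfl fun j _ => sum_filter_of_ne fun t ht hne => ?_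
  by_contra htr
  exact hne (hf t j (by simp only [mem_range] at ht; omega))

theorem dym_luks_probabilities_sum_to_one_general (r n : ℕ) (hn : 1 ≤ n) :
    ∑ t ∈ Finset.range (r + 1), ∑ j ∈ Finset.Icc t n,
        (-1 : ℝ) ^ (j - t) * (j.choose t) * (n.choose j) * (r.choose j) *
          (Nat.factorial j) * ((n - j : ℕ) : ℝ) ^ (r - j) / (n : ℝ) ^ r = 1 := by
  set a : ℕ → ℝ := fun j =>
    (n.choose j) * (r.choose j) * (Nat.factorial j) * ((n - j : ℕ) : ℝ) ^ (r - j) / (n : ℝ) ^ r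
  have hterm : ∀ t j, (-1 : ℝ) ^ (j - t) * (j.choose t) * (n.choose j) * (r.choose j) *
      (Nat.factorial j) * ((n - j : ℕ) : ℝ) ^ (r - j) / (n : ℝ) ^ r =
      (-1 : ℝ) ^ (j - t) * (j.choose t) * a j := fun t j => by simp only [a]; ring
  have ha_zero : a 0 = 1 := by
    have : (n : ℝ) ^ r ≠ 0 := pow_ne_zero r (by exact_mod_cast (by omega : n ≠ 0))
    simp [a, div_self this]
  simp_rw [hterm]
  rw [sum_range_sum_Icc_eq_sum_range_sum_range _ r n fun t j hj => by
    simp [a, Nat.choose_eq_zero_of_lt hj]]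
  simp_rw [← sum_mul, sum_range_neg_one_pow_sub_mul_choose]
  simp [sum_range_succ', ha_zero]

/-- The Dym–Luks transition probabilities
`P_{r,r−t}(n) = ∑_{j=t}^{n} (−1)^{j−t} C(j,t) C(n,j) C(r,j) j! (n−j)^{r−j}/n^r`
form a probability distribution over `t ∈ {0,…,r}`: their sum equals one, for all
positive integers `r` and `n`. -/
theorem dym_luks_probabilities_sum_to_one (r n : ℕ) (hr : 1 ≤ r) (hn : 1 ≤ n) :
    ∑ t ∈ Finset.range (r + 1), ∑ j ∈ Finset.Icc t n,
        (-1 : ℝ) ^ (j - t) * (j.choose t) * (n.choose j) * (r.choose j) *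
          (Nat.factorial j) * ((n - j : ℕ) : ℝ) ^ (r - j) / (n : ℝ) ^ r = 1 :=
  dym_luks_probabilities_sum_to_one_general r n hn
end

section
/- In the ball-and-cell game, the probability generating functions satisfy the recurrence F_{r,n}(x) = (x/(1 − P_{r,r}(n)·x)) · ∑_{t=1}^{r} P_{r,r−t}(n) · F_{r−t,n}(x), with F_{0,n}(x) = 1, valid for |x| < 1, provided P_{r,r}(n) < 1. -/
open MeasureTheory ProbabilityTheory Finset

/-- The probability `P_{r,r-t}(n)` that exactly `t` of the `r` balls are captured (are sole
occupants of their cells) when `r` balls are placed uniformly at random into `n` cells. -/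
noncomputable def captureProb (r n t : ℕ) : ℝ :=
  ((Finset.univ.filter
      (fun f : Fin r → Fin n =>
        (Finset.univ.filter (fun b : Fin r => ∀ b' : Fin r, b' ≠ b → f b' ≠ f b)).card = t)).card
    : ℝ) / (n : ℝ) ^ r

/-!
First-step analysis. Let `q_r(k)` be the probability that the game with `r` balls is over after
`k` rounds. After the first placement `g` the survivors play a fresh game in which only their
number matters, so `q_r(k+1) = ∑_t P_{r,r-t} q_{r-t}(k)`; since both sides concern finitely many
rounds, this reduces to counting placement sequences. Passing to the limit in this recurrence,
`L = P_{r,r} L + (1 - P_{r,r})`, so `q_r(k) → 1` when `P_{r,r} < 1` and the game ends almost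
surely. Then `∑_k q_r(k) x^k = F_r(x) / (1 - x)`, because `∑_{k ≥ T} x^k = x^T / (1 - x)`, and
multiplying the recurrence by `x^{k+1}` and summing over `k` gives
`F_r = x ∑_t P_{r,r-t} F_{r-t}`, which is solved for `F_r`.
-/

open Filter Topology

section Combinatorics

variable {r n : ℕ}

def capturedBalls (g : Fin r → Fin n) : Finset (Fin r) :=
  univ.filter fun b => ∀ b', b' ≠ b → g b' ≠ g b

lemma remainingBalls_univ (g : Fin r → Fin n) :
    remainingBalls r n univ g = (capturedBalls g)ᶜ := by
  ext b
  simp [remainingBalls, capturedBalls, and_comm]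

lemma card_remainingBalls_univ (g : Fin r → Fin n) :
    #(remainingBalls r n univ g) = r - #(capturedBalls g) := by
  rw [remainingBalls_univ, card_compl, Fintype.card_fin]

lemma sum_card_remainingBalls_univ_div (h : ℕ → ℝ) :
    (∑ g : Fin r → Fin n, h #(remainingBalls r n univ g)) / (n : ℝ) ^ r =
      captureProb r n 0 * h r + ∑ t ∈ Icc 1 r, captureProb r n t * h (r - t) := by
  have hmaps : ∀ g ∈ (univ : Finset (Fin r → Fin n)), #(capturedBalls g) ∈ Icc 0 r :=
    fun g _ => mem_Icc.2 ⟨Nat.zero_le _, (card_le_univ _).trans_eq (Fintype.card_fin r)⟩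
  rw [← sum_fiberwise_of_maps_to hmaps, sum_div, ← add_sum_Ioc_eq_sum_Icc (Nat.zero_le r),
    ← Icc_add_one_left_eq_Ioc, zero_add]
  have hfiber : ∀ t, (∑ g ∈ univ with #(capturedBalls g) = t, h #(remainingBalls r n univ g)) /
      (n : ℝ) ^ r = captureProb r n t * h (r - t) := by
    intro t
    rw [sum_congr rfl fun g hg => by rw [card_remainingBalls_univ, (mem_filter.1 hg).2],
      sum_const, nsmul_eq_mul, captureProb, div_mul_eq_mul_div]
    rfl
  simp only [hfiber, Nat.sub_zero]

lemma captureProb_zero_add_sum (hn : n ≠ 0) :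
    captureProb r n 0 + ∑ t ∈ Icc 1 r, captureProb r n t = 1 := by
  simpa [Fintype.card_fun, hn] using (sum_card_remainingBalls_univ_div (r := r) (n := n) 1).symm

lemma captureProb_zero_lt_one (hn : 1 ≤ n) (hr : 1 ≤ r) (h : 2 ≤ n ∨ r ≤ 1) :
    captureProb r n 0 < 1 := by
  let g : Fin r → Fin n := fun b => if b = ⟨0, hr⟩ then ⟨0, hn⟩ else ⟨n - 1, by omega⟩
  have hg : #(capturedBalls g) ≠ 0 := by
    refine card_ne_zero.2 ⟨⟨0, hr⟩, mem_filter.2 ⟨mem_univ _, fun b hb => ?_⟩⟩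
    have hb0 : b.val ≠ 0 := fun h0 => hb (Fin.ext h0)
    simp only [g, if_neg hb, if_pos rfl, ne_eq, Fin.mk.injEq]
    omega
  have hlt : #{f : Fin r → Fin n | #(capturedBalls f) = 0} < n ^ r := by
    simpa using card_lt_card (filter_ssubset.2 ⟨g, mem_univ _, by simpa using hg⟩)
  rw [captureProb, div_lt_one (by positivity)]
  exact_mod_cast hlt

lemma captureProb_one_zero (hr : 2 ≤ r) : captureProb r 1 0 = 1 := by
  have : Nontrivial (Fin r) := Fin.nontrivial_iff_two_le.2 hr
  have hnone : ∀ g : Fin r → Fin 1, capturedBalls g = ∅ := fun g =>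
    filter_eq_empty_iff.2 fun b _ hb =>
      let ⟨b', hb'⟩ := exists_ne b
      hb b' hb' (Subsingleton.elim _ _)
  simp only [capturedBalls] at hnone
  simp [captureProb, hnone]

lemma two_le_or_le_one_of_captureProb_zero_lt_one (hn : 1 ≤ n)
    (h : captureProb r n 0 < 1) : 2 ≤ n ∨ r ≤ 1 := by
  by_contra! hcon
  obtain rfl : n = 1 := by omega
  exact h.ne (captureProb_one_zero hcon.2)

end Combinatorics

section Relabel

lemma card_filter_fst_equiv {A B C : Type*} [Fintype A] [Fintype B] [Fintype C] (e : A ≃ B × C)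
    (P : B → Prop) [DecidablePred P] :
    #{a | P (e a).1} = #{b | P b} * Fintype.card C := by
  rw [card_equiv e (t := univ.filter P ×ˢ (univ : Finset C)) (by simp), card_product, card_univ]

variable {r s n : ℕ}

lemma remainingBalls_map (j : Fin s ↪ Fin r) (T : Finset (Fin s)) (g : Fin r → Fin n) :
    remainingBalls r n (T.map j) g = (remainingBalls s n T (g ∘ j)).map j := by
  ext b
  simp only [remainingBalls, Finset.mem_map, mem_filter, Function.comp_apply]
  constructor
  · rintro ⟨⟨c, hc, rfl⟩, _, ⟨c', hc', rfl⟩, hne, heq⟩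
    exact ⟨c, ⟨hc, c', hc', fun h => hne (h ▸ rfl), heq⟩, rfl⟩
  · rintro ⟨c, ⟨hc, c', hc', hne, heq⟩, rfl⟩
    exact ⟨⟨c, hc, rfl⟩, j c', ⟨c', hc', rfl⟩, j.injective.ne hne, heq⟩

lemma foldl_remainingBalls_map (j : Fin s ↪ Fin r) (T : Finset (Fin s))
    (l : List (Fin r → Fin n)) :
    l.foldl (remainingBalls r n) (T.map j) =
      ((l.map (· ∘ j)).foldl (remainingBalls s n) T).map j := by
  induction l generalizing T with
  | nil => rfl
  | cons g l ih => simp only [List.foldl_cons, List.map_cons, remainingBalls_map, ih]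

end Relabel

section Rounds

variable {r n : ℕ}

lemma gameState_eq_foldl (ω : ℕ → Fin r → Fin n) (k : ℕ) :
    gameState r n ω k = (List.ofFn fun i : Fin k => ω i).foldl (remainingBalls r n) univ := by
  induction k with
  | zero => rfl
  | succ k ih =>
    rw [gameState, ih, List.ofFn_succ', List.concat_eq_append, List.foldl_append]
    rfl

lemma gameState_antitone (ω : ℕ → Fin r → Fin n) : Antitone (gameState r n ω) :=
  antitone_nat_of_succ_le fun _ => filter_subset _ _

lemma gameDuration_le_iff {ω : ℕ → Fin r → Fin n} (h : ∃ k, gameState r n ω k = ∅) {k : ℕ} :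
    gameDuration r n ω ≤ k ↔ gameState r n ω k = ∅ := by
  refine ⟨fun hk => subset_empty.1 ?_, fun hk => Nat.sInf_le hk⟩
  exact (gameState_antitone ω hk).trans_eq (Nat.sInf_mem h)

/-- The probability, for independent uniform placements, that no ball of `S` is left after
`k` rounds. -/
noncomputable def clearProb (n : ℕ) (S : Finset (Fin r)) (k : ℕ) : ℝ :=
  #{y : Fin k → Fin r → Fin n | (List.ofFn y).foldl (remainingBalls r n) S = ∅} /
    ((n : ℝ) ^ r) ^ k

lemma clearProb_succ (S : Finset (Fin r)) (k : ℕ) :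
    clearProb n S (k + 1) =
      (∑ g : Fin r → Fin n, clearProb n (remainingBalls r n S g) k) / (n : ℝ) ^ r := by
  have hcount : #{y : Fin (k + 1) → Fin r → Fin n |
        (List.ofFn y).foldl (remainingBalls r n) S = ∅} =
      ∑ g : Fin r → Fin n, #{z : Fin k → Fin r → Fin n |
        (List.ofFn z).foldl (remainingBalls r n) (remainingBalls r n S g) = ∅} := by
    simp only [card_filter]
    rw [← (Fin.consEquiv fun _ => Fin r → Fin n).sum_comp, Fintype.sum_prod_type]
    simp [Fin.consEquiv, List.ofFn_succ]
  rw [clearProb, hcount, pow_succ, Nat.cast_sum, sum_div, sum_div]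
  simp only [clearProb, div_div]

lemma clearProb_eq_clearProb_univ (hn : n ≠ 0) (S : Finset (Fin r)) (k : ℕ) :
    clearProb n S k = clearProb n (univ : Finset (Fin #S)) k := by
  -- A placement splits into its restriction to `S`, relabelled by `Fin #S`, and the placement
  -- of the other balls, which does not affect the play of `S`.
  let e : Fin #S ≃ S := S.equivFin.symm
  let j : Fin #S ↪ Fin r := e.toEmbedding.trans (Function.Embedding.subtype _)
  have hS : univ.map j = S := by
    ext b
    simpa [j] using ⟨fun ⟨a, ha⟩ => ha ▸ (e a).2, fun hb => ⟨e.symm ⟨b, hb⟩, by simp⟩⟩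
  let E : (Fin k → Fin r → Fin n) ≃ (Fin k → Fin #S → Fin n) × (Fin k → {b // b ∉ S} → Fin n) :=
    (Equiv.piCongrRight fun _ => (Equiv.piEquivPiSubtypeProd (· ∈ S) _).trans
      ((Equiv.arrowCongr e.symm (Equiv.refl _)).prodCongr (Equiv.refl _))).trans
      (Equiv.arrowProdEquivProdArrow _ _ _)
  have hcount : #{y : Fin k → Fin r → Fin n | (List.ofFn y).foldl (remainingBalls r n) S = ∅} =
      #{z : Fin k → Fin #S → Fin n | (List.ofFn z).foldl (remainingBalls #S n) univ = ∅} *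
        (n ^ (r - #S)) ^ k := by
    have hcard : Fintype.card (Fin k → {b // b ∉ S} → Fin n) = (n ^ (r - #S)) ^ k := by
      simp [Fintype.card_subtype_compl]
    rw [← hcard, ← card_filter_fst_equiv E]
    congr 1
    refine filter_congr fun y _ => ?_
    change _ ↔ (List.ofFn fun i => y i ∘ j).foldl _ _ = ∅
    conv_lhs => rw [← hS, foldl_remainingBalls_map, map_eq_empty, List.map_ofFn]
    rfl
  have hpow : ((n : ℝ) ^ r) ^ k = ((n : ℝ) ^ #S) ^ k * ((n : ℝ) ^ (r - #S)) ^ k := by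
    rw [← mul_pow, ← pow_add,
      Nat.add_sub_cancel' (card_le_univ S |>.trans_eq (Fintype.card_fin r))]
  have hn' : ((n : ℝ) ^ (r - #S)) ^ k ≠ 0 := by positivity
  rw [clearProb, clearProb, hcount, hpow]
  push_cast
  exact mul_div_mul_right _ _ hn'

end Rounds

section Prefix

variable {α : Type*} [MeasurableSpace α]

lemma measurable_prefix (k : ℕ) : Measurable fun (ω : ℕ → α) (i : Fin k) => ω i :=
  measurable_pi_lambda _ fun i => measurable_pi_apply (i : ℕ)

variable [Fintype α] [DiscreteMeasurableSpace α] {μ : Measure (ℕ → α)} {c : ENNReal}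

lemma measure_preimage_prefix (hindep : iIndepFun (fun k ω => ω k) μ)
    (hunif : ∀ k a, μ {ω | ω k = a} = c) (k : ℕ) (A : Finset (Fin k → α)) :
    μ ((fun ω (i : Fin k) => ω i) ⁻¹' A) = #A * c ^ k := by
  have hpoint : ∀ y : Fin k → α, μ ((fun ω (i : Fin k) => ω i) ⁻¹' {y}) = c ^ k := by
    intro y
    have hy : (fun ω (i : Fin k) => ω i) ⁻¹' {y} =
        ⋂ i : Fin k, (fun ω : ℕ → α => ω i) ⁻¹' {y i} := by
      ext ω
      simp [funext_iff]
    rw [hy, (hindep.precomp Fin.val_injective).meas_iInter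
      fun i => ⟨{y i}, measurableSet_singleton _, rfl⟩]
    simp only [Set.preimage, Set.mem_singleton_iff, hunif, prod_const, card_univ,
      Fintype.card_fin]
  rw [← sum_measure_preimage_singleton A
    fun y _ => measurable_prefix k (measurableSet_singleton y)]
  simp [hpoint]

end Prefix

section Duration

variable {r n : ℕ} {μ : Measure (ℕ → Fin r → Fin n)}

lemma measurableSet_gameState_eq_empty (k : ℕ) :
    MeasurableSet {ω : ℕ → Fin r → Fin n | gameState r n ω k = ∅} := by
  simp only [gameState_eq_foldl]
  exact measurable_prefix k (MeasurableSet.of_discrete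
    (s := {y : Fin k → Fin r → Fin n | (List.ofFn y).foldl (remainingBalls r n) univ = ∅}))

lemma measureReal_gameState_eq_empty (hindep : iIndepFun (fun k ω => ω k) μ)
    (hunif : ∀ k g, μ {ω | ω k = g} = ((n : ENNReal) ^ r)⁻¹) (k : ℕ) :
    μ.real {ω | gameState r n ω k = ∅} = clearProb n (univ : Finset (Fin r)) k := by
  have hset : {ω | gameState r n ω k = ∅} = (fun ω (i : Fin k) => ω i) ⁻¹'
      ↑(univ.filter fun y : Fin k → Fin r → Fin n =>
        (List.ofFn y).foldl (remainingBalls r n) univ = ∅) := by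
    ext ω
    simp [gameState_eq_foldl]
  rw [measureReal_def, hset, measure_preimage_prefix hindep hunif, clearProb]
  simp [div_eq_mul_inv]

end Duration

section HittingTime

lemma hasSum_ite_le_pow {x : ℝ} (hx : |x| < 1) (T : ℕ) :
    HasSum (fun k => if T ≤ k then x ^ k else 0) (x ^ T / (1 - x)) := by
  rw [← hasSum_nat_add_iff' T, sum_eq_zero fun i hi => if_neg (not_le.2 (mem_range.1 hi)),
    sub_zero]
  simpa [pow_add, div_eq_mul_inv, mul_comm] using
    (hasSum_geometric_of_abs_lt_one hx).mul_left (x ^ T)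

lemma hasSum_measureReal_mul_pow {Ω : Type*} [MeasurableSpace Ω] {μ : Measure Ω}
    [IsFiniteMeasure μ] {A : ℕ → Set Ω} (hA : ∀ k, MeasurableSet (A k)) {T : Ω → ℕ}
    (hT : ∀ᵐ ω ∂μ, ∀ k, T ω ≤ k ↔ ω ∈ A k) {x : ℝ} (hx : |x| < 1) :
    HasSum (fun k => μ.real (A k) * x ^ k) ((∫ ω, x ^ T ω ∂μ) / (1 - x)) := by
  have h := hasSum_integral_of_dominated_convergence (μ := μ)
    (F := fun k => (A k).indicator fun _ => x ^ k) (f := fun ω => x ^ T ω / (1 - x))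
    (fun k _ => |x| ^ k) (fun k => aestronglyMeasurable_const.indicator (hA k))
    (fun k => ae_of_all _ fun ω => (norm_indicator_le_norm_self _ ω).trans_eq (by simp))
    (ae_of_all _ fun _ => summable_geometric_of_abs_lt_one (by rwa [abs_abs])) (integrable_const _)
    (hT.mono fun ω hω => by simpa [Set.indicator, ← hω] using hasSum_ite_le_pow hx (T ω))
  simpa [integral_indicator_const _ (hA _), integral_div, mul_comm] using h

end HittingTime

section Termination

variable {r n : ℕ} {μ : Measure (ℕ → Fin r → Fin n)} [IsProbabilityMeasure μ]

lemma ae_exists_gameState_eq_empty_s16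
    (h : Tendsto (fun k => μ.real {ω | gameState r n ω k = ∅}) atTop (𝓝 1)) :
    ∀ᵐ ω ∂μ, ∃ k, gameState r n ω k = ∅ := by
  rw [ae_iff, ← measureReal_eq_zero_iff]
  refine le_antisymm (ge_of_tendsto (by simpa using h.const_sub 1)
    (Eventually.of_forall fun k => ?_)) measureReal_nonneg
  rw [← probReal_compl_eq_one_sub (measurableSet_gameState_eq_empty k)]
  exact measureReal_mono fun ω hω => not_exists.1 hω k

lemma hasSum_measureReal_gameState_mul_pow
    (h : Tendsto (fun k => μ.real {ω | gameState r n ω k = ∅}) atTop (𝓝 1)) {x : ℝ}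
    (hx : |x| < 1) :
    HasSum (fun k => μ.real {ω | gameState r n ω k = ∅} * x ^ k)
      ((∫ ω, x ^ gameDuration r n ω ∂μ) / (1 - x)) :=
  hasSum_measureReal_mul_pow measurableSet_gameState_eq_empty
    ((ae_exists_gameState_eq_empty_s16 h).mono fun _ hω _ => gameDuration_le_iff hω) hx

end Termination

section Recurrence

variable {n : ℕ} {μ : ∀ r, Measure (ℕ → Fin r → Fin n)}

lemma measureReal_gameState_succ (hn : n ≠ 0) (hindep : ∀ r, iIndepFun (fun k ω => ω k) (μ r))
    (hunif : ∀ r k g, μ r {ω | ω k = g} = ((n : ENNReal) ^ r)⁻¹) (r k : ℕ) :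
    (μ r).real {ω | gameState r n ω (k + 1) = ∅} =
      captureProb r n 0 * (μ r).real {ω | gameState r n ω k = ∅} +
        ∑ t ∈ Icc 1 r,
          captureProb r n t * (μ (r - t)).real {ω | gameState (r - t) n ω k = ∅} := by
  simp only [measureReal_gameState_eq_empty (hindep _) (hunif _), clearProb_succ,
    clearProb_eq_clearProb_univ hn (remainingBalls r n univ _)]
  exact sum_card_remainingBalls_univ_div fun s => clearProb n (univ : Finset (Fin s)) k

lemma tendsto_measureReal_gameState (hn : 1 ≤ n) [∀ r, IsProbabilityMeasure (μ r)]
    (hindep : ∀ r, iIndepFun (fun k ω => ω k) (μ r))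
    (hunif : ∀ r k g, μ r {ω | ω k = g} = ((n : ENNReal) ^ r)⁻¹) (r : ℕ) (h : 2 ≤ n ∨ r ≤ 1) :
    Tendsto (fun k => (μ r).real {ω | gameState r n ω k = ∅}) atTop (𝓝 1) := by
  induction r using Nat.strong_induction_on with
  | _ r ih =>
  rcases Nat.eq_zero_or_pos r with rfl | hr
  · simp [eq_empty_of_isEmpty]
  set q := fun k => (μ r).real {ω | gameState r n ω k = ∅}
  have hmono : Monotone q := fun a b hab =>
    measureReal_mono fun ω hω => subset_empty.1 ((gameState_antitone ω hab).trans_eq hω)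
  obtain ⟨L, hL⟩ : ∃ L, Tendsto q atTop (𝓝 L) :=
    ⟨_, tendsto_atTop_ciSup hmono ⟨1, Set.forall_mem_range.2 fun _ => measureReal_le_one⟩⟩
  have hsucc : Tendsto (fun k => q (k + 1)) atTop
      (𝓝 (captureProb r n 0 * L + ∑ t ∈ Icc 1 r, captureProb r n t * 1)) := by
    simp only [q, measureReal_gameState_succ (by omega) hindep hunif]
    refine (hL.const_mul _).add (tendsto_finsetSum _ fun t ht => ?_)
    have ht := mem_Icc.1 ht
    exact (ih (r - t) (by omega) (by omega)).const_mul _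
  have hfix := tendsto_nhds_unique (hL.comp (tendsto_add_atTop_nat 1)) hsucc
  simp only [mul_one] at hfix
  have hsum := captureProb_zero_add_sum (r := r) (by omega : n ≠ 0)
  have hprod : (1 - captureProb r n 0) * (L - 1) = 0 := by linear_combination hfix + hsum
  have hP0 := captureProb_zero_lt_one hn hr h
  rwa [← sub_eq_zero.1 ((mul_eq_zero.1 hprod).resolve_left (by linarith))]

lemma integral_pow_gameDuration_eq (hn : 1 ≤ n) [∀ r, IsProbabilityMeasure (μ r)]
    (hindep : ∀ r, iIndepFun (fun k ω => ω k) (μ r))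
    (hunif : ∀ r k g, μ r {ω | ω k = g} = ((n : ENNReal) ^ r)⁻¹) {r : ℕ} (hr : 1 ≤ r)
    (h : 2 ≤ n ∨ r ≤ 1) {x : ℝ} (hx : |x| < 1) :
    ∫ ω, x ^ gameDuration r n ω ∂(μ r) =
      x * (captureProb r n 0 * ∫ ω, x ^ gameDuration r n ω ∂(μ r) +
        ∑ t ∈ Icc 1 r, captureProb r n t * ∫ ω, x ^ gameDuration (r - t) n ω ∂(μ (r - t))) := by
  set F := fun s => ∫ ω, x ^ gameDuration s n ω ∂(μ s)
  show F r = x * (captureProb r n 0 * F r + ∑ t ∈ Icc 1 r, captureProb r n t * F (r - t))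
  have hF : ∀ s ≤ r, HasSum (fun k => (μ s).real {ω | gameState s n ω k = ∅} * x ^ k)
      (F s / (1 - x)) := fun s hs =>
    hasSum_measureReal_gameState_mul_pow
      (tendsto_measureReal_gameState hn hindep hunif s (by omega)) hx
  have h0 : (μ r).real {ω | gameState r n ω 0 = ∅} = 0 := by
    have : Nonempty (Fin r) := ⟨⟨0, hr⟩⟩
    simp [gameState, univ_nonempty.ne_empty]
  have hshift := (hasSum_nat_add_iff' 1).2 (hF r le_rfl)
  simp only [range_one, sum_singleton, h0, zero_mul, sub_zero] at hshift
  have hrec := (((hF r le_rfl).mul_left (captureProb r n 0)).add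
    (hasSum_sum (s := Icc 1 r) fun t _ =>
      (hF (r - t) (Nat.sub_le r t)).mul_left (captureProb r n t))).mul_left x
  have hterm : (fun k => (μ r).real {ω | gameState r n ω (k + 1) = ∅} * x ^ (k + 1)) = fun k =>
      x * (captureProb r n 0 * ((μ r).real {ω | gameState r n ω k = ∅} * x ^ k) +
        ∑ t ∈ Icc 1 r,
          captureProb r n t * ((μ (r - t)).real {ω | gameState (r - t) n ω k = ∅} * x ^ k)) := by
    funext k
    rw [measureReal_gameState_succ (by omega) hindep hunif, pow_succ, add_mul, sum_mul, mul_add,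
      mul_sum]
    congr 1
    · ring
    · exact sum_congr rfl fun _ _ => by ring
  rw [hterm] at hshift
  have hx1 : 1 - x ≠ 0 := by linarith [le_abs_self x]
  simpa only [← mul_div_assoc, ← sum_div, ← add_div, div_left_inj' hx1] using
    hshift.unique hrec

end Recurrence

theorem ball_cell_pgf_recurrence_general (n : ℕ)
    (μ : ∀ r : ℕ, Measure (ℕ → Fin r → Fin n)) (hprob : ∀ r, IsProbabilityMeasure (μ r))
    (hindep : ∀ r, iIndepFun (fun k ω => ω k) (μ r))
    (hunif : ∀ r (k : ℕ) (g : Fin r → Fin n), μ r {ω | ω k = g} = ((n : ENNReal) ^ r)⁻¹) :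
    (∀ x : ℝ, ∫ ω, x ^ gameDuration 0 n ω ∂(μ 0) = 1) ∧
    (∀ x : ℝ, |x| < 1 → ∀ r : ℕ, 1 ≤ r → captureProb r n 0 < 1 →
      ∫ ω, x ^ gameDuration r n ω ∂(μ r) =
        x / (1 - captureProb r n 0 * x) *
          ∑ t ∈ Finset.Icc 1 r,
            captureProb r n t * ∫ ω, x ^ gameDuration (r - t) n ω ∂(μ (r - t))) := by
  refine ⟨fun x => ?_, fun x hx r hr hP0 => ?_⟩
  · have hT : ∀ ω, gameDuration 0 n ω = 0 := fun ω =>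
      Nat.sInf_eq_zero.2 (Or.inl (eq_empty_of_isEmpty _))
    simp [hT]
  · obtain ⟨ω⟩ := nonempty_of_isProbabilityMeasure (μ r)
    have hn : 1 ≤ n := (ω 0 ⟨0, hr⟩).pos
    have hrec := integral_pow_gameDuration_eq hn hindep hunif hr
      (two_le_or_le_one_of_captureProb_zero_lt_one hn hP0) hx
    have hden : 1 - captureProb r n 0 * x ≠ 0 := by
      have : captureProb r n 0 * x < 1 := by
        nlinarith [abs_lt.1 hx, (show 0 ≤ captureProb r n 0 by unfold captureProb; positivity)]
      linarith
    rw [div_mul_eq_mul_div, eq_div_iff hden]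
    linear_combination hrec

/-- In the ball-and-cell game with `n` cells (for each `r`, the game with `r`
balls is played on its own probability space with i.i.d. uniform placements each round), the
probability generating functions `F_{r,n}(x) = E[x^{T_{r,n}}]` satisfy, for `|x| < 1` and
provided `P_{r,r}(n) < 1`, the recurrence
`F_{r,n}(x) = (x/(1 − P_{r,r}(n)·x)) · ∑_{t=1}^{r} P_{r,r−t}(n) · F_{r−t,n}(x)`,
with `F_{0,n}(x) = 1`. -/
theorem ball_cell_pgf_recurrence (n : ℕ) (hn : 1 ≤ n)
    (μ : ∀ r : ℕ, Measure (ℕ → Fin r → Fin n)) (hprob : ∀ r, IsProbabilityMeasure (μ r))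
    (hindep : ∀ r, iIndepFun (fun k ω => ω k) (μ r))
    (hunif : ∀ r (k : ℕ) (g : Fin r → Fin n), μ r {ω | ω k = g} = ((n : ENNReal) ^ r)⁻¹) :
    (∀ x : ℝ, ∫ ω, x ^ gameDuration 0 n ω ∂(μ 0) = 1) ∧
    (∀ x : ℝ, |x| < 1 → ∀ r : ℕ, 1 ≤ r → captureProb r n 0 < 1 →
      ∫ ω, x ^ gameDuration r n ω ∂(μ r) =
        x / (1 - captureProb r n 0 * x) *
          ∑ t ∈ Finset.Icc 1 r,
            captureProb r n t * ∫ ω, x ^ gameDuration (r - t) n ω ∂(μ (r - t))) :=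
  ball_cell_pgf_recurrence_general n μ hprob hindep hunif
end
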